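/- arXiv:1906.08961 — 2 statements merged into one kernel-verified Lean document; each statement's English description precedes it below -/
import Mathlib

section
/- For any a > 0, C > 0, x ∈ [0,1], and τ ≥ 2, ∫₀^x ∫₀^∞ (1/(τ p₁)) · e^{-a(x - y)/(τ p₁)} · e^{-C p₁²} dp₁ dy ≤ K · (ln τ + 1)/τ, where K depends only on a and C. -/
open MeasureTheory Set Real

private lemma rpow_neg_half_eq (x : ℝ) (hx : 0 ≤ x) :
    x ^ (-(1/2) : ℝ) = (Real.sqrt x)⁻¹ := by
  rw [Real.rpow_neg hx, Real.sqrt_eq_rpow]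

private lemma exp_neg_le_rpow {z : ℝ} (hz : 0 < z) :
    Real.exp (-z) ≤ z ^ (-(1/2) : ℝ) := by
  rw [rpow_neg_half_eq z hz.le, Real.exp_neg]
  have h1 : Real.sqrt z ≤ Real.exp z := by
    nlinarith [Real.sq_sqrt hz.le, Real.sqrt_nonneg z, Real.add_one_le_exp z,
      sq_nonneg (Real.sqrt z - 1)]
  exact inv_anti₀ (Real.sqrt_pos.2 hz) h1

set_option maxHeartbeats 1000000 in
private lemma inner_bound (a C τ u : ℝ) (ha : 0 < a) (hC : 0 < C) (hτ : 2 ≤ τ) (hu : 0 < u) :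
    (∫ p₁ in Set.Ioi (0 : ℝ),
        (1 / (τ * p₁)) * Real.exp (-(a * u) / (τ * p₁)) * Real.exp (-C * p₁ ^ 2))
      ≤ (Real.log τ + 1 / C) / τ + (2 / (Real.sqrt a * τ)) * u ^ (-(1/2) : ℝ) := by
  have hτ0 : (0:ℝ) < τ := by linarith
  have hlog : 0 ≤ Real.log τ := Real.log_nonneg (by linarith)
  have hsa : 0 < Real.sqrt a := Real.sqrt_pos.2 ha
  set f : ℝ → ℝ := fun p => (1 / (τ * p)) * Real.exp (-(a * u) / (τ * p)) * Real.exp (-C * p ^ 2)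
    with hfdef
  have hRHS0 : 0 ≤ (Real.log τ + 1 / C) / τ + (2 / (Real.sqrt a * τ)) * u ^ (-(1/2) : ℝ) := by
    have h1 : 0 ≤ (Real.log τ + 1 / C) / τ := by positivity
    have h2 : 0 ≤ (2 / (Real.sqrt a * τ)) * u ^ (-(1/2) : ℝ) := by positivity
    linarith
  by_cases hint : IntegrableOn f (Set.Ioi (0:ℝ)) volume
  · -- split the domain
    have hi1 : IntegrableOn f (Set.Ioc 0 (1/τ)) volume := hint.mono_set Set.Ioc_subset_Ioi_self
    have hi2 : IntegrableOn f (Set.Ioi (1/τ)) volume :=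
      hint.mono_set (Set.Ioi_subset_Ioi (by positivity))
    have hsplit : (∫ p in Set.Ioi (0:ℝ), f p)
        = (∫ p in Set.Ioc (0:ℝ) (1/τ), f p) + ∫ p in Set.Ioi (1/τ), f p := by
      rw [← MeasureTheory.setIntegral_union Set.Ioc_disjoint_Ioi_same measurableSet_Ioi hi1 hi2,
        Set.Ioc_union_Ioi_eq_Ioi (by positivity)]
    -- first piece
    have hp1 : (∫ p in Set.Ioc (0:ℝ) (1/τ), f p)
        ≤ (2 / (Real.sqrt a * τ)) * u ^ (-(1/2) : ℝ) := by
      have hw0 : 0 < a * u := by positivity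
      set c : ℝ := (a*u) ^ (-(1/2):ℝ) * τ ^ (-(1/2):ℝ) with hc
      have hmint : IntegrableOn (fun p : ℝ => c * p ^ (-(1/2):ℝ)) (Set.Ioc 0 (1/τ)) volume := by
        have := (intervalIntegral.intervalIntegrable_rpow' (a := 0) (b := 1/τ)
          (r := -(1/2)) (by norm_num))
        exact ((intervalIntegrable_iff_integrableOn_Ioc_of_le (by positivity)).mp this).const_mul c
      have hle : ∀ p ∈ Set.Ioc (0:ℝ) (1/τ), f p ≤ c * p ^ (-(1/2):ℝ) := by
        intro p hp
        have hp0 : 0 < p := hp.1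
        have hz : 0 < τ * p := by positivity
        have hw : 0 < a * u := by positivity
        have step : f p ≤ (1 / (τ * p)) * ((a*u)/(τ*p)) ^ (-(1/2):ℝ) * 1 := by
          have e1 : Real.exp (-(a * u) / (τ * p)) ≤ ((a*u)/(τ*p)) ^ (-(1/2):ℝ) := by
            rw [neg_div]
            exact exp_neg_le_rpow (div_pos hw hz)
          have e2 : Real.exp (-C * p ^ 2) ≤ 1 := by
            rw [Real.exp_le_one_iff]; nlinarith
          have h0 : (0:ℝ) ≤ 1 / (τ * p) := by positivity
          calc f p ≤ (1 / (τ * p)) * ((a*u)/(τ*p)) ^ (-(1/2):ℝ) * Real.exp (-C * p ^ 2) := by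
                exact mul_le_mul_of_nonneg_right (mul_le_mul_of_nonneg_left e1 h0)
                  (Real.exp_nonneg _)
            _ ≤ (1 / (τ * p)) * ((a*u)/(τ*p)) ^ (-(1/2):ℝ) * 1 := by
                apply mul_le_mul_of_nonneg_left e2
                positivity
        refine step.trans (le_of_eq ?_)
        rw [mul_one, rpow_neg_half_eq _ (div_nonneg hw.le hz.le), hc,
          rpow_neg_half_eq _ hw.le, rpow_neg_half_eq _ hτ0.le, rpow_neg_half_eq _ hp0.le]
        have s1 : Real.sqrt (a*u/(τ*p)) = Real.sqrt (a*u) / (Real.sqrt τ * Real.sqrt p) := by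
          rw [Real.sqrt_div hw.le, Real.sqrt_mul hτ0.le]
        have t1 : Real.sqrt τ * Real.sqrt τ = τ := Real.mul_self_sqrt hτ0.le
        have t2 : Real.sqrt p * Real.sqrt p = p := Real.mul_self_sqrt hp0.le
        have hq : 0 < Real.sqrt (a*u) := Real.sqrt_pos.2 hw
        have hst : 0 < Real.sqrt τ := Real.sqrt_pos.2 hτ0
        have hsp : 0 < Real.sqrt p := Real.sqrt_pos.2 hp0
        have hτp : τ * p = Real.sqrt τ * Real.sqrt p * (Real.sqrt τ * Real.sqrt p) := by
          nlinarith [t1, t2]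
        rw [s1, hτp]
        field_simp
      calc (∫ p in Set.Ioc (0:ℝ) (1/τ), f p)
          ≤ ∫ p in Set.Ioc (0:ℝ) (1/τ), c * p ^ (-(1/2):ℝ) :=
            MeasureTheory.setIntegral_mono_on hi1 hmint measurableSet_Ioc hle
        _ = c * ∫ p in Set.Ioc (0:ℝ) (1/τ), p ^ (-(1/2):ℝ) := by
            rw [MeasureTheory.integral_const_mul]
        _ = c * (2 * Real.sqrt (1/τ)) := by
            rw [← intervalIntegral.integral_of_le (by positivity : (0:ℝ) ≤ 1/τ),
              integral_rpow (Or.inl (by norm_num)), Real.sqrt_eq_rpow]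
            rw [Real.zero_rpow (by norm_num)]
            norm_num
            left
            ring
        _ = (2 / (Real.sqrt a * τ)) * u ^ (-(1/2) : ℝ) := by
            rw [hc, rpow_neg_half_eq _ hw0.le, rpow_neg_half_eq _ hτ0.le,
              rpow_neg_half_eq _ hu.le, Real.sqrt_mul ha.le, one_div, Real.sqrt_inv]
            have t1 : Real.sqrt τ * Real.sqrt τ = τ := Real.mul_self_sqrt hτ0.le
            have hst : 0 < Real.sqrt τ := Real.sqrt_pos.2 hτ0
            have hsu : 0 < Real.sqrt u := Real.sqrt_pos.2 hu
            conv_rhs => rw [← t1]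
            field_simp
    -- second piece
    have hp2 : (∫ p in Set.Ioi (1/τ), f p) ≤ Real.log τ / τ + 1 / (C * τ) := by
      have h1τ : 1/τ ≤ (1:ℝ) := by
        rw [div_le_one hτ0]; linarith
      have hi2a : IntegrableOn f (Set.Ioc (1/τ) 1) volume := hi2.mono_set Set.Ioc_subset_Ioi_self
      have hi2b : IntegrableOn f (Set.Ioi (1:ℝ)) volume :=
        hi2.mono_set (Set.Ioi_subset_Ioi h1τ)
      have hsplit2 : (∫ p in Set.Ioi (1/τ), f p)
          = (∫ p in Set.Ioc (1/τ) 1, f p) + ∫ p in Set.Ioi (1:ℝ), f p := by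
        rw [← MeasureTheory.setIntegral_union Set.Ioc_disjoint_Ioi_same measurableSet_Ioi hi2a
          hi2b, Set.Ioc_union_Ioi_eq_Ioi h1τ]
      have hA : (∫ p in Set.Ioc (1/τ) 1, f p) ≤ Real.log τ / τ := by
        have hmaj : IntegrableOn (fun p : ℝ => 1/τ * (1/p)) (Set.Ioc (1/τ) 1) volume := by
          refine (intervalIntegrable_iff_integrableOn_Ioc_of_le h1τ).mp ?_
          apply ContinuousOn.intervalIntegrable
          apply ContinuousOn.mul continuousOn_const
          apply ContinuousOn.div continuousOn_const continuousOn_id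
          intro y hy
          rw [Set.uIcc_of_le h1τ] at hy
          have : 0 < y := lt_of_lt_of_le (by positivity) hy.1
          exact ne_of_gt this
        have hle : ∀ p ∈ Set.Ioc (1/τ) 1, f p ≤ 1/τ * (1/p) := by
          intro p hp
          have hp0 : 0 < p := lt_trans (by positivity) hp.1
          have e1 : Real.exp (-(a * u) / (τ * p)) ≤ 1 := by
            rw [Real.exp_le_one_iff]
            rw [neg_div]
            simp only [Left.neg_nonpos_iff]
            positivity
          have e2 : Real.exp (-C * p ^ 2) ≤ 1 := by
            rw [Real.exp_le_one_iff]; nlinarith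
          calc f p ≤ (1 / (τ * p)) * 1 * 1 := by
                apply mul_le_mul (mul_le_mul_of_nonneg_left e1 (by positivity)) e2
                  (Real.exp_nonneg _)
                positivity
            _ = 1/τ * (1/p) := by field_simp
        calc (∫ p in Set.Ioc (1/τ) 1, f p) ≤ ∫ p in Set.Ioc (1/τ) 1, 1/τ * (1/p) :=
              MeasureTheory.setIntegral_mono_on hi2a hmaj measurableSet_Ioc hle
          _ = 1/τ * ∫ p in Set.Ioc (1/τ) 1, (1/p) := MeasureTheory.integral_const_mul _ _
          _ = Real.log τ / τ := by
              rw [← intervalIntegral.integral_of_le h1τ, integral_one_div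
                (by rw [Set.uIcc_of_le h1τ]
                    intro h
                    have h2 : 0 < 1/τ := by positivity
                    have := h.1
                    linarith)]
              rw [one_div_one_div]
              ring
      have hB : (∫ p in Set.Ioi (1:ℝ), f p) ≤ 1 / (C * τ) := by
        have hmaj : IntegrableOn (fun p : ℝ => 1/τ * Real.exp (-(C * p))) (Set.Ioi (1:ℝ))
            volume := by
          have := (exp_neg_integrableOn_Ioi 1 hC).const_mul (1/τ)
          simpa [neg_mul, IntegrableOn] using this
        have hle : ∀ p ∈ Set.Ioi (1:ℝ), f p ≤ 1/τ * Real.exp (-(C * p)) := by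
          intro p hp
          have hp1 : (1:ℝ) < p := hp
          have hp0 : 0 < p := by linarith
          have e1 : Real.exp (-(a * u) / (τ * p)) ≤ 1 := by
            rw [Real.exp_le_one_iff, neg_div]
            simp only [Left.neg_nonpos_iff]
            positivity
          have e2 : Real.exp (-C * p ^ 2) ≤ Real.exp (-(C * p)) := by
            apply Real.exp_le_exp.2
            nlinarith [mul_nonneg (mul_nonneg hC.le hp0.le) (sub_nonneg.2 hp1.le)]
          have h3 : 1 / (τ * p) ≤ 1/τ := by
            rw [one_div, one_div]
            apply inv_anti₀ hτ0
            nlinarith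
          calc f p ≤ (1/(τ*p)) * 1 * Real.exp (-(C * p)) := by
                apply mul_le_mul (mul_le_mul_of_nonneg_left e1 (by positivity)) e2
                  (Real.exp_nonneg _) (by positivity)
            _ ≤ 1/τ * Real.exp (-(C * p)) := by
                rw [mul_one]
                exact mul_le_mul_of_nonneg_right h3 (Real.exp_nonneg _)
        calc (∫ p in Set.Ioi (1:ℝ), f p) ≤ ∫ p in Set.Ioi (1:ℝ), 1/τ * Real.exp (-(C * p)) :=
              MeasureTheory.setIntegral_mono_on hi2b hmaj measurableSet_Ioi hle
          _ = 1/τ * ∫ p in Set.Ioi (1:ℝ), Real.exp (-(C * p)) :=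
              MeasureTheory.integral_const_mul _ _
          _ = 1/τ * (C⁻¹ * Real.exp (-(C * 1))) := by
              rw [integral_comp_mul_left_Ioi (fun t => Real.exp (-t)) 1 hC,
                integral_exp_neg_Ioi, smul_eq_mul]
          _ ≤ 1 / (C * τ) := by
              have hE : Real.exp (-(C*1)) ≤ 1 := by
                rw [Real.exp_le_one_iff]; nlinarith
              have key : 1/τ * (C⁻¹ * Real.exp (-(C*1))) ≤ 1/τ * (C⁻¹ * 1) := by
                apply mul_le_mul_of_nonneg_left _ (by positivity)
                exact mul_le_mul_of_nonneg_left hE (by positivity)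
              have heq : 1/τ * (C⁻¹ * 1) = 1/(C*τ) := by
                field_simp
              linarith
         
      rw [hsplit2]
      linarith
    rw [hsplit]
    have : Real.log τ / τ + 1 / (C * τ) = (Real.log τ + 1 / C) / τ := by
      field_simp
    linarith
  · rw [MeasureTheory.integral_undef hint]
    exact hRHS0

set_option maxHeartbeats 1000000 in
theorem decay_estimate (a C : ℝ) (ha : 0 < a) (hC : 0 < C) :
    ∃ K : ℝ, 0 < K ∧ ∀ τ x : ℝ, 2 ≤ τ → x ∈ Set.Icc (0 : ℝ) 1 →
      (∫ y in (0 : ℝ)..x, ∫ p₁ in Set.Ioi (0 : ℝ),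
          (1 / (τ * p₁)) * Real.exp (-(a * (x - y)) / (τ * p₁)) * Real.exp (-C * p₁ ^ 2))
        ≤ K * (Real.log τ + 1) / τ := by
  have hsa : 0 < Real.sqrt a := Real.sqrt_pos.2 ha
  refine ⟨1 + 1/C + 4/Real.sqrt a, by positivity, ?_⟩
  intro τ x hτ hx
  obtain ⟨hx0, hx1⟩ := hx
  have hτ0 : (0:ℝ) < τ := by linarith
  have hlog : 0 ≤ Real.log τ := Real.log_nonneg (by linarith)
  set K : ℝ := 1 + 1/C + 4/Real.sqrt a with hK
  have hK0 : 0 < K := by positivity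
  set F : ℝ → ℝ := fun y => ∫ p₁ in Set.Ioi (0 : ℝ),
      (1 / (τ * p₁)) * Real.exp (-(a * (x - y)) / (τ * p₁)) * Real.exp (-C * p₁ ^ 2) with hF
  set c₁ : ℝ := (Real.log τ + 1/C)/τ with hc₁
  set c₂ : ℝ := 2/(Real.sqrt a * τ) with hc₂
  have hc₁0 : 0 ≤ c₁ := by positivity
  have hc₂0 : 0 ≤ c₂ := by positivity
  set g : ℝ → ℝ := fun y => c₁ + c₂ * (x - y) ^ (-(1/2):ℝ) with hg
  by_cases hFi : IntervalIntegrable F volume 0 x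
  · have hgi : IntervalIntegrable g volume 0 x := by
      apply IntervalIntegrable.add intervalIntegrable_const
      have h1 : IntervalIntegrable (fun t : ℝ => t ^ (-(1/2):ℝ)) volume 0 x :=
        intervalIntegral.intervalIntegrable_rpow' (by norm_num)
      have h2 := (h1.comp_sub_left x).symm
      simp only [sub_zero, sub_self] at h2
      exact h2.const_mul c₂
    have hae : F ≤ᵐ[volume.restrict (Set.Icc (0:ℝ) x)] g := by
      have hne : ∀ᵐ y ∂(volume.restrict (Set.Icc (0:ℝ) x)), y ≠ x := by
        apply MeasureTheory.ae_restrict_of_ae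
        rw [MeasureTheory.ae_iff]
        simp only [ne_eq, not_not, Set.setOf_eq_eq_singleton]
        exact Real.volume_singleton
      have hmem := MeasureTheory.ae_restrict_mem (μ := volume)
        (measurableSet_Icc (a := (0:ℝ)) (b := x))
      filter_upwards [hne, hmem] with y hy hymem
      have hu : 0 < x - y := by
        rcases lt_or_eq_of_le hymem.2 with h | h
        · linarith
        · exact absurd h hy
      exact inner_bound a C τ (x - y) ha hC hτ hu
    have step1 : (∫ y in (0:ℝ)..x, F y) ≤ ∫ y in (0:ℝ)..x, g y :=
      intervalIntegral.integral_mono_ae_restrict hx0 hFi hgi hae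
    have step2 : (∫ y in (0:ℝ)..x, g y) = x * c₁ + c₂ * (2 * x ^ ((1:ℝ)/2)) := by
      rw [hg]
      rw [intervalIntegral.integral_add intervalIntegrable_const
        (by
          have h1 : IntervalIntegrable (fun t : ℝ => t ^ (-(1/2):ℝ)) volume 0 x :=
            intervalIntegral.intervalIntegrable_rpow' (by norm_num)
          have h2 := (h1.comp_sub_left x).symm
          simp only [sub_zero, sub_self] at h2
          exact h2.const_mul c₂)]
      rw [intervalIntegral.integral_const, intervalIntegral.integral_const_mul,
        intervalIntegral.integral_comp_sub_left (fun t : ℝ => t ^ (-(1/2):ℝ)) x]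
      simp only [sub_zero, sub_self]
      rw [integral_rpow (Or.inl (by norm_num))]
      rw [Real.zero_rpow (by norm_num)]
      norm_num
      left
      ring
    have step3 : x * c₁ + c₂ * (2 * x ^ ((1:ℝ)/2)) ≤ c₁ + 2 * c₂ := by
      have hx12 : x ^ ((1:ℝ)/2) ≤ 1 := Real.rpow_le_one hx0 hx1 (by norm_num)
      have h1 : x * c₁ ≤ c₁ := by nlinarith
      have h2 : c₂ * (2 * x ^ ((1:ℝ)/2)) ≤ 2 * c₂ := by nlinarith
      linarith
    have step4 : c₁ + 2 * c₂ ≤ K * (Real.log τ + 1) / τ := by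
      have hc : c₁ + 2 * c₂ = (Real.log τ + 1/C + 4/Real.sqrt a) / τ := by
        rw [hc₁, hc₂]
        field_simp
        ring
      rw [hc, hK]
      rw [div_le_div_iff₀ hτ0 hτ0]
      have h1 : 0 ≤ 1/C := by positivity
      have h2 : 0 ≤ 4/Real.sqrt a := by positivity
      nlinarith [mul_nonneg (mul_nonneg (add_nonneg h1 h2) hlog) hτ0.le, hτ0.le]
    calc (∫ y in (0:ℝ)..x, F y) ≤ ∫ y in (0:ℝ)..x, g y := step1
      _ = x * c₁ + c₂ * (2 * x ^ ((1:ℝ)/2)) := step2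
      _ ≤ c₁ + 2 * c₂ := step3
      _ ≤ K * (Real.log τ + 1) / τ := step4
  · rw [intervalIntegral.integral_undef hFi]
    positivity
end

section
/- Let N_f, N_g : [0,1] → ℝ be integrable with N_f, N_g ≥ a_l > 0, and let x ∈ [0,1], s > 0. Then |e^{-(1/s)∫₀^x N_f(y) dy} - e^{-(1/s)∫₀^x N_g(y) dy}| ≤ (1/s) e^{-a_l x/s} ∫₀^x |N_f(y) - N_g(y)| dy. -/
lemma exp_lip_aux {m a b : ℝ} (ha : m ≤ a) (hb : m ≤ b) :
    |Real.exp (-a) - Real.exp (-b)| ≤ Real.exp (-m) * |a - b| := by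
  wlog hab : a ≤ b generalizing a b
  · rw [abs_sub_comm, abs_sub_comm a b]
    exact this hb ha (le_of_not_ge hab)
  have h1 : Real.exp (-b) ≤ Real.exp (-a) := Real.exp_le_exp.mpr (by linarith)
  rw [abs_of_nonneg (by linarith), abs_of_nonpos (by linarith)]
  have : Real.exp (-a) - Real.exp (-b) = Real.exp (-a) * (1 - Real.exp (a - b)) := by
    rw [mul_sub, mul_one, ← Real.exp_add]; ring_nf
  rw [this]
  have h2 : 1 - Real.exp (a - b) ≤ b - a := by
    have := Real.add_one_le_exp (a - b); linarith
  have h3 : Real.exp (-a) ≤ Real.exp (-m) := Real.exp_le_exp.mpr (by linarith)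
  have h4 : (0:ℝ) ≤ b - a := by linarith
  calc Real.exp (-a) * (1 - Real.exp (a - b)) ≤ Real.exp (-a) * (b - a) := by
        exact mul_le_mul_of_nonneg_left h2 (Real.exp_pos _).le
    _ ≤ Real.exp (-m) * (b - a) := mul_le_mul_of_nonneg_right h3 h4
    _ = Real.exp (-m) * -(a - b) := by ring

theorem exponential_damping_lipschitz (N_f N_g : ℝ → ℝ) (a_l x s : ℝ)
    (hal : 0 < a_l) (hs : 0 < s) (hx : x ∈ Set.Icc (0 : ℝ) 1)
    (hfint : IntervalIntegrable N_f MeasureTheory.volume 0 x)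
    (hgint : IntervalIntegrable N_g MeasureTheory.volume 0 x)
    (hfg : IntervalIntegrable (fun y => |N_f y - N_g y|) MeasureTheory.volume 0 x)
    (hflb : ∀ y ∈ Set.Icc (0 : ℝ) 1, a_l ≤ N_f y)
    (hglb : ∀ y ∈ Set.Icc (0 : ℝ) 1, a_l ≤ N_g y) :
    |Real.exp (-(1 / s) * ∫ y in (0 : ℝ)..x, N_f y) -
        Real.exp (-(1 / s) * ∫ y in (0 : ℝ)..x, N_g y)| ≤
      (1 / s) * Real.exp (-(a_l * x) / s) * ∫ y in (0 : ℝ)..x, |N_f y - N_g y| := by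
  obtain ⟨hx0, hx1⟩ := hx
  set If := ∫ y in (0:ℝ)..x, N_f y
  set Ig := ∫ y in (0:ℝ)..x, N_g y
  have hconst : IntervalIntegrable (fun _ : ℝ => a_l) MeasureTheory.volume 0 x :=
    intervalIntegrable_const
  have hsub : ∀ y ∈ Set.Icc (0:ℝ) x, y ∈ Set.Icc (0:ℝ) 1 := fun y hy =>
    ⟨hy.1, hy.2.trans hx1⟩
  have hIf : a_l * x ≤ If := by
    have := intervalIntegral.integral_mono_on hx0 hconst hfint
      (fun y hy => hflb y (hsub y hy))
    simpa [intervalIntegral.integral_const, smul_eq_mul, mul_comm] using this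
  have hIg : a_l * x ≤ Ig := by
    have := intervalIntegral.integral_mono_on hx0 hconst hgint
      (fun y hy => hglb y (hsub y hy))
    simpa [intervalIntegral.integral_const, smul_eq_mul, mul_comm] using this
  have hm : a_l * x / s ≤ (1/s) * If := by
    rw [div_eq_mul_one_div, mul_comm]
    exact mul_le_mul_of_nonneg_left hIf (by positivity)
  have hm' : a_l * x / s ≤ (1/s) * Ig := by
    rw [div_eq_mul_one_div, mul_comm]
    exact mul_le_mul_of_nonneg_left hIg (by positivity)
  have key := exp_lip_aux hm hm'
  have habs : |If - Ig| ≤ ∫ y in (0:ℝ)..x, |N_f y - N_g y| := by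
    have h1 : If - Ig = ∫ y in (0:ℝ)..x, (N_f y - N_g y) := by
      rw [intervalIntegral.integral_sub hfint hgint]
    rw [h1]
    exact intervalIntegral.abs_integral_le_integral_abs hx0
  calc |Real.exp (-(1/s) * If) - Real.exp (-(1/s) * Ig)|
      = |Real.exp (-((1/s) * If)) - Real.exp (-((1/s) * Ig))| := by ring_nf
    _ ≤ Real.exp (-(a_l * x / s)) * |(1/s) * If - (1/s) * Ig| := key
    _ = Real.exp (-(a_l * x) / s) * ((1/s) * |If - Ig|) := by
        rw [← mul_sub, abs_mul, abs_of_nonneg (by positivity : (0:ℝ) ≤ 1/s), neg_div]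
    _ ≤ Real.exp (-(a_l * x) / s) * ((1/s) * ∫ y in (0:ℝ)..x, |N_f y - N_g y|) := by
        apply mul_le_mul_of_nonneg_left _ (Real.exp_pos _).le
        exact mul_le_mul_of_nonneg_left habs (by positivity)
    _ = (1/s) * Real.exp (-(a_l * x) / s) * ∫ y in (0:ℝ)..x, |N_f y - N_g y| := by ring
end
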